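/- Let A ∈ ℝ^{m×n}, let Θ ∈ ℝ^{n×n} be diagonal with strictly positive diagonal entries, let N ⊆ {1,…,n} with complement B, let A_N be the submatrix of columns of A in N and Θ_N the corresponding principal submatrix of Θ. Let S = A_N Θ_N A_Nᵀ, R = off(S), and let δ_d > 0 satisfy δ_d > Σ_{j≠i} |S_{ij}| for every i ∈ {1,…,m}. With K = AΘAᵀ + δ_d I_m, the spectral radius of K^{-1} R is strictly less than 1, and consequently every eigenvalue of K^{-1}(K − R) lies in the open interval (0, 2). -/

import Mathlib

/-!
For `x ≠ 0`, the row-sum bound `|x*Rx| ≤ ∑ᵢ (∑ⱼ |Rᵢⱼ|) |xᵢ|²`, the domination `∑ⱼ |Rᵢⱼ| < δ_d`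
and `AΘAᵀ ⪰ 0` give `|x*Rx| < δ_d ‖x‖² ≤ x*Kx`. An eigenpair `K⁻¹Rx = μx` is a generalized
eigenpair `Rx = μKx`, so `μ = x*Rx / x*Kx` is real of modulus `< 1`; the eigenvalues of
`K⁻¹(K - R) = 1 - K⁻¹R` are the numbers `1 - μ ∈ (0, 2)`.
-/

open Matrix

/-- off(B): same off-diagonal entries as B, zero diagonal. -/
def offDiag {ι : Type*} [DecidableEq ι] (B : Matrix ι ι ℝ) : Matrix ι ι ℝ :=
  B - Matrix.diagonal (fun i => B i i)

open scoped ComplexOrder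

theorem Finset.sum_sum_mul_mul_le_sum_mul_sq {ι : Type*} [Fintype ι] {a : ι → ι → ℝ}
    (ha : ∀ i j, 0 ≤ a i j) (hsymm : ∀ i j, a i j = a j i) (t : ι → ℝ) :
    ∑ i, ∑ j, a i j * (t i * t j) ≤ ∑ i, (∑ j, a i j) * t i ^ 2 := by
  have hswap : ∑ i, ∑ j, a i j * t j ^ 2 = ∑ i, ∑ j, a i j * t i ^ 2 := by
    rw [Finset.sum_comm]; simp only [hsymm]
  calc ∑ i, ∑ j, a i j * (t i * t j)
      ≤ ∑ i, ∑ j, (a i j * t i ^ 2 + a i j * t j ^ 2) / 2 := by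
        gcongr with i _ j _
        nlinarith [mul_nonneg (ha i j) (sq_nonneg (t i - t j))]
    _ = ∑ i, (∑ j, a i j) * t i ^ 2 := by
        simp only [← Finset.sum_div, Finset.sum_add_distrib, hswap, Finset.sum_mul]
        ring

namespace Matrix

theorem PosSemidef.posDef_add_smul_one {ι : Type*} [DecidableEq ι] {P : Matrix ι ι ℝ}
    (hP : P.PosSemidef) {δ : ℝ} (hδ : 0 < δ) : (P + δ • 1).PosDef :=
  PosDef.posSemidef_add hP (PosDef.one.smul hδ)

variable {ι 𝕜 : Type*} [Fintype ι] [RCLike 𝕜]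

theorem IsHermitian.norm_star_dotProduct_mulVec_le {R : Matrix ι ι 𝕜} (hR : R.IsHermitian)
    (x : ι → 𝕜) : ‖star x ⬝ᵥ R *ᵥ x‖ ≤ ∑ i, (∑ j, ‖R i j‖) * ‖x i‖ ^ 2 := by
  have hsymm (i j : ι) : ‖R i j‖ = ‖R j i‖ := by rw [← hR.apply i j, norm_star]
  calc ‖star x ⬝ᵥ R *ᵥ x‖ ≤ ∑ i, ∑ j, ‖R i j‖ * (‖x i‖ * ‖x j‖) := by
        simp only [dotProduct, mulVec, Finset.mul_sum, Pi.star_apply]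
        refine (norm_sum_le _ _).trans (Finset.sum_le_sum fun i _ => (norm_sum_le _ _).trans ?_)
        refine Finset.sum_le_sum fun j _ => le_of_eq ?_
        rw [norm_mul, norm_mul, norm_star]
        ring
    _ ≤ ∑ i, (∑ j, ‖R i j‖) * ‖x i‖ ^ 2 :=
        Finset.sum_sum_mul_mul_le_sum_mul_sq (fun _ _ => norm_nonneg _) hsymm _

theorem re_star_dotProduct_self (x : ι → 𝕜) :
    RCLike.re (star x ⬝ᵥ x) = ∑ i, ‖x i‖ ^ 2 := by
  simp only [dotProduct, Pi.star_apply, RCLike.star_def, RCLike.conj_mul, map_sum]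
  norm_cast

theorem PosSemidef.mul_sum_norm_sq_le_re_dotProduct_add_smul_one [DecidableEq ι]
    {P : Matrix ι ι 𝕜} (hP : P.PosSemidef) (δ : ℝ) (x : ι → 𝕜) :
    δ * ∑ i, ‖x i‖ ^ 2 ≤ RCLike.re (star x ⬝ᵥ (P + δ • 1) *ᵥ x) := by
  rw [add_mulVec, smul_mulVec, one_mulVec, dotProduct_add, dotProduct_smul, map_add,
    RCLike.smul_re, re_star_dotProduct_self]
  linarith [hP.re_dotProduct_nonneg x]

theorem IsHermitian.norm_star_dotProduct_mulVec_lt_re [DecidableEq ι] {R P : Matrix ι ι 𝕜}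
    (hR : R.IsHermitian) (hP : P.PosSemidef) {δ : ℝ} (hdom : ∀ i, ∑ j, ‖R i j‖ < δ)
    {x : ι → 𝕜} (hx : x ≠ 0) :
    ‖star x ⬝ᵥ R *ᵥ x‖ < RCLike.re (star x ⬝ᵥ (P + δ • 1) *ᵥ x) := by
  obtain ⟨k, hk⟩ := Function.ne_iff.mp hx
  calc ‖star x ⬝ᵥ R *ᵥ x‖ ≤ ∑ i, (∑ j, ‖R i j‖) * ‖x i‖ ^ 2 := hR.norm_star_dotProduct_mulVec_le x
    _ < ∑ i, δ * ‖x i‖ ^ 2 := by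
        refine Finset.sum_lt_sum (fun i _ => by gcongr; exact (hdom i).le)
          ⟨k, Finset.mem_univ k, mul_lt_mul_of_pos_right (hdom k) (by positivity)⟩
    _ = δ * ∑ i, ‖x i‖ ^ 2 := (Finset.mul_sum ..).symm
    _ ≤ RCLike.re (star x ⬝ᵥ (P + δ • 1) *ᵥ x) :=
        hP.mul_sum_norm_sq_le_re_dotProduct_add_smul_one δ x

theorem exists_real_abs_lt_one_of_mulVec_eq_smul_mulVec {R K : Matrix ι ι 𝕜}
    (hR : R.IsHermitian) (hK : K.IsHermitian)
    (hRK : ∀ x ≠ 0, ‖star x ⬝ᵥ R *ᵥ x‖ < RCLike.re (star x ⬝ᵥ K *ᵥ x))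
    {ν : 𝕜} {x : ι → 𝕜} (hx : x ≠ 0) (h : R *ᵥ x = ν • K *ᵥ x) :
    ∃ r : ℝ, ν = r ∧ |r| < 1 := by
  set ρ := RCLike.re (star x ⬝ᵥ R *ᵥ x)
  set q := RCLike.re (star x ⬝ᵥ K *ᵥ x)
  have hρ : (ρ : 𝕜) = star x ⬝ᵥ R *ᵥ x :=
    RCLike.conj_eq_iff_re.mp (RCLike.conj_eq_iff_im.mpr (hR.im_star_dotProduct_mulVec_self x))
  have hq : (q : 𝕜) = star x ⬝ᵥ K *ᵥ x :=
    RCLike.conj_eq_iff_re.mp (RCLike.conj_eq_iff_im.mpr (hK.im_star_dotProduct_mulVec_self x))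
  have hρq : |ρ| < q := by simpa only [← hρ, RCLike.norm_ofReal] using hRK x hx
  have hq_pos : 0 < q := (abs_nonneg ρ).trans_lt hρq
  refine ⟨ρ / q, ?_, by rwa [abs_div, abs_of_pos hq_pos, div_lt_one hq_pos]⟩
  rw [RCLike.ofReal_div, eq_div_iff (RCLike.ofReal_ne_zero.mpr hq_pos.ne'), hρ, hq, h,
    dotProduct_smul, smul_eq_mul]

theorem PosSemidef.map_ofReal {P : Matrix ι ι ℝ} (hP : P.PosSemidef) :
    (P.map ((↑) : ℝ → 𝕜)).PosSemidef := by
  obtain ⟨m, v, rfl⟩ := posSemidef_iff_eq_sum_vecMulVec.mp hP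
  have hmap : (∑ i, vecMulVec (v i) (star (v i))).map ((↑) : ℝ → 𝕜) =
      ∑ i, vecMulVec (fun j => (v i j : 𝕜)) (star fun j => (v i j : 𝕜)) := by
    ext a b
    simp [Matrix.sum_apply, vecMulVec_apply]
  rw [hmap]
  exact posSemidef_sum _ fun i _ => posSemidef_vecMulVec_self_star _

theorem exists_real_abs_lt_one_of_inv_mul_mulVec_eq_smul [DecidableEq ι]
    {R P : Matrix ι ι ℝ} (hR : R.IsSymm) (hP : P.PosSemidef) {δ : ℝ} (hδ : 0 < δ)
    (hdom : ∀ i, ∑ j, |R i j| < δ) {μ : 𝕜} {x : ι → 𝕜} (hx : x ≠ 0)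
    (h : ((P + δ • 1)⁻¹ * R).map ((↑) : ℝ → 𝕜) *ᵥ x = μ • x) :
    ∃ r : ℝ, μ = r ∧ |r| < 1 := by
  set K := P + δ • 1
  have hK : K.PosDef := hP.posDef_add_smul_one hδ
  have hKc : K.map ((↑) : ℝ → 𝕜) = P.map (↑) + δ • 1 := by
    ext i j
    by_cases hij : i = j <;> simp [K, hij, Algebra.algebraMap_eq_smul_one, add_smul]
  have hconj : Function.Semiconj ((↑) : ℝ → 𝕜) star star := fun r => by simp
  have hRc : (R.map ((↑) : ℝ → 𝕜)).IsHermitian := (isHermitian_iff_isSymm.mpr hR).map _ hconj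
  have hgen : R.map ((↑) : ℝ → 𝕜) *ᵥ x = μ • K.map (↑) *ᵥ x := by
    have hfac : R.map ((↑) : ℝ → 𝕜) = K.map (↑) * (K⁻¹ * R).map (↑) := by
      rw [← Matrix.map_mul (f := algebraMap ℝ 𝕜), ← Matrix.mul_assoc,
        mul_nonsing_inv _ hK.det_pos.ne'.isUnit, Matrix.one_mul]
    rw [hfac, ← mulVec_mulVec, h, mulVec_smul]
  refine exists_real_abs_lt_one_of_mulVec_eq_smul_mulVec hRc (hK.isHermitian.map _ hconj)
    (fun y hy => ?_) hx hgen
  rw [hKc]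
  exact hRc.norm_star_dotProduct_mulVec_lt_re hP.map_ofReal (fun i => by simpa using hdom i) hy

theorem map_ofReal_inv_mul_mulVec_eq_one_sub_smul [DecidableEq ι] {K R : Matrix ι ι ℝ}
    (hK : IsUnit K.det) {μ : 𝕜} {x : ι → 𝕜}
    (h : (K⁻¹ * (K - R)).map ((↑) : ℝ → 𝕜) *ᵥ x = μ • x) :
    (K⁻¹ * R).map ((↑) : ℝ → 𝕜) *ᵥ x = (1 - μ) • x := by
  have hsplit : (K⁻¹ * (K - R)).map ((↑) : ℝ → 𝕜) = 1 - (K⁻¹ * R).map (↑) := by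
    rw [Matrix.mul_sub, nonsing_inv_mul _ hK]
    simp [Matrix.map_sub]
  rw [hsplit, sub_mulVec, one_mulVec] at h
  rw [sub_smul, one_smul, ← h, sub_sub_cancel]

end Matrix

theorem offDiag_isSymm {ι : Type*} [DecidableEq ι] {B : Matrix ι ι ℝ} (hB : B.IsSymm) :
    (offDiag B).IsSymm :=
  hB.sub (isSymm_diagonal _)

theorem sum_abs_offDiag_apply {ι : Type*} [Fintype ι] [DecidableEq ι] (B : Matrix ι ι ℝ) (i : ι) :
    ∑ j, |offDiag B i j| = ∑ j ∈ Finset.univ.erase i, |B i j| := by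
  rw [← Finset.add_sum_erase _ _ (Finset.mem_univ i)]
  simp only [offDiag, Matrix.sub_apply, diagonal_apply_eq, sub_self, abs_zero, zero_add]
  refine Finset.sum_congr rfl fun j hj => ?_
  rw [diagonal_apply_ne _ (Finset.ne_of_mem_erase hj).symm, sub_zero]

theorem stmt_5 {m n : ℕ} (A : Matrix (Fin m) (Fin n) ℝ)
    (d : Fin n → ℝ) (hd : ∀ j, 0 < d j)
    (N : Finset (Fin n))
    (AN : Matrix (Fin m) {j // j ∈ N} ℝ)
    (ThetaN : Matrix {j // j ∈ N} {j // j ∈ N} ℝ)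
    (hThetaN : ThetaN = Matrix.diagonal (fun j : {j // j ∈ N} => d j))
    (δd : ℝ) (hδd : 0 < δd)
    (S R K : Matrix (Fin m) (Fin m) ℝ)
    (hS : S = AN * ThetaN * ANᵀ)
    (hR : R = offDiag S)
    (hdom : ∀ i : Fin m, ∑ j ∈ Finset.univ.erase i, |S i j| < δd)
    (hK : K = A * Matrix.diagonal d * Aᵀ + δd • (1 : Matrix (Fin m) (Fin m) ℝ)) :
    (∀ μ : ℂ, ∀ x : Fin m → ℂ, x ≠ 0 →
        ((K⁻¹ * R).map (fun r : ℝ => (r : ℂ))).mulVec x = μ • x → ‖μ‖ < 1) ∧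
    (∀ μ : ℂ, ∀ x : Fin m → ℂ, x ≠ 0 →
        ((K⁻¹ * (K - R)).map (fun r : ℝ => (r : ℂ))).mulVec x = μ • x →
        μ.im = 0 ∧ 0 < μ.re ∧ μ.re < 2) := by
  have hSsymm : S.IsSymm := by simp [hS, hThetaN, IsSymm, transpose_mul, Matrix.mul_assoc]
  have hP : (A * diagonal d * Aᵀ).PosSemidef := by
    simpa using (PosSemidef.diagonal fun j => (hd j).le).mul_mul_conjTranspose_same A
  have hKdet : IsUnit K.det := hK ▸ (hP.posDef_add_smul_one hδd).det_pos.ne'.isUnit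
  have key (μ : ℂ) (x : Fin m → ℂ) (hx : x ≠ 0)
      (h : (K⁻¹ * R).map (fun r : ℝ => (r : ℂ)) *ᵥ x = μ • x) : ∃ r : ℝ, μ = r ∧ |r| < 1 := by
    subst hR hK
    exact exists_real_abs_lt_one_of_inv_mul_mulVec_eq_smul (offDiag_isSymm hSsymm) hP hδd
      (fun i => (sum_abs_offDiag_apply S i).trans_lt (hdom i)) hx h
  refine ⟨fun μ x hx h => ?_, fun μ x hx h => ?_⟩
  · obtain ⟨r, rfl, hr⟩ := key μ x hx h
    simpa using hr
  · obtain ⟨r, hr, hr1⟩ := key (1 - μ) x hx (map_ofReal_inv_mul_mulVec_eq_one_sub_smul hKdet h)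
    obtain rfl : μ = 1 - r := by rw [← hr, sub_sub_cancel]
    rw [abs_lt] at hr1
    simp only [Complex.sub_im, Complex.one_im, Complex.ofReal_im, sub_zero, Complex.sub_re,
      Complex.one_re, Complex.ofReal_re, true_and]
    constructor <;> linarith
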